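/- arXiv:1507.01738 — 2 statements merged into one kernel-verified Lean document; each statement's English description precedes it below -/
import Mathlib

section
/- Let m₁ be a positive real number and set n₂ = 4m₁. Then for θ ∈ (0, π/2), the equation 2m₁ + 4n₂ = m₁·((cot(θ/2))² + (tan(θ/2))²) + 4n₂·(tan θ)² holds if and only if (tan θ)² = 1/2; moreover, any such θ satisfies m₁·(tan(θ/2) − cot(θ/2)) + 2n₂·tan θ ≠ 0. (So in type II-BC₁ with n₂ = 4m₁ there is exactly one proper biharmonic regular orbit.) -/
/-!
With `x = θ / 2`, one has `cot² x + tan² x = 4 cot² θ + 2` and `tan x - cot x = -2 cot θ`, so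
both conditions become rational in `t = tan θ = (cot θ)⁻¹`: the biharmonic one reads
`n₂ t⁴ - n₂ t² + m₁ = 0` and the harmonic one `n₂ t² = m₁`. For `n₂ = 4 m₁` the first is
`m₁ (2 t² - 1)² = 0`, i.e. `t² = 1/2`, and then `n₂ t² = 2 m₁ ≠ m₁`.
-/

open Real

namespace Real

theorem cot_half_sq_add_tan_half_sq {x : ℝ} (hx : sin x ≠ 0) :
    cot (x / 2) ^ 2 + tan (x / 2) ^ 2 = 4 * cot x ^ 2 + 2 := by
  obtain ⟨y, rfl⟩ : ∃ y, x = 2 * y := ⟨x / 2, by ring⟩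
  rw [sin_two_mul] at hx
  obtain ⟨h2s, hc⟩ := mul_ne_zero_iff.mp hx
  have hs : sin y ≠ 0 := right_ne_zero_of_mul h2s
  rw [mul_div_cancel_left₀ y two_ne_zero, cot_eq_cos_div_sin, cot_eq_cos_div_sin,
    tan_eq_sin_div_cos, sin_two_mul, cos_two_mul']
  field_simp
  ring

theorem tan_half_sub_cot_half (x : ℝ) : tan (x / 2) - cot (x / 2) = -2 * cot x := by
  obtain ⟨y, rfl⟩ : ∃ y, x = 2 * y := ⟨x / 2, by ring⟩
  rw [mul_div_cancel_left₀ y two_ne_zero, cot_eq_cos_div_sin, cot_eq_cos_div_sin,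
    tan_eq_sin_div_cos, sin_two_mul, cos_two_mul']
  by_cases hs : sin y = 0
  · simp [hs]
  by_cases hc : cos y = 0
  · simp [hc]
  field_simp
  ring

end Real

section CohomogeneityOneOrbit

variable {m₁ n₂ t : ℝ}

theorem biharmonic_condition_iff (ht : t ≠ 0) :
    2 * m₁ + 4 * n₂ = m₁ * (4 * t⁻¹ ^ 2 + 2) + 4 * n₂ * t ^ 2 ↔
      n₂ * t ^ 4 - n₂ * t ^ 2 + m₁ = 0 := by
  constructor <;> intro h
  · field_simp at h
    linear_combination -h / 4
  · field_simp
    linear_combination -4 * h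

theorem harmonic_condition_iff (ht : t ≠ 0) :
    m₁ * (-2 * t⁻¹) + 2 * n₂ * t = 0 ↔ n₂ * t ^ 2 = m₁ := by
  constructor <;> intro h
  · field_simp at h
    linear_combination h / 2
  · field_simp
    linear_combination 2 * h

end CohomogeneityOneOrbit

theorem stmt_10 (m₁ n₂ : ℝ) (hm₁ : 0 < m₁) (hn₂ : n₂ = 4 * m₁) :
    ∀ θ ∈ Set.Ioo 0 (π / 2),
      (2 * m₁ + 4 * n₂ =
          m₁ * ((Real.cot (θ / 2)) ^ 2 + (Real.tan (θ / 2)) ^ 2) +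
            4 * n₂ * (Real.tan θ) ^ 2 ↔
        (Real.tan θ) ^ 2 = 1 / 2) ∧
      (2 * m₁ + 4 * n₂ =
          m₁ * ((Real.cot (θ / 2)) ^ 2 + (Real.tan (θ / 2)) ^ 2) +
            4 * n₂ * (Real.tan θ) ^ 2 →
        m₁ * (Real.tan (θ / 2) - Real.cot (θ / 2)) + 2 * n₂ * Real.tan θ ≠ 0) := by
  intro θ ⟨hθ₀, hθ₁⟩
  have hsin : sin θ ≠ 0 := (sin_pos_of_pos_of_lt_pi hθ₀ (by linarith [pi_pos])).ne'
  have htan : tan θ ≠ 0 := (tan_pos_of_pos_of_lt_pi_div_two hθ₀ hθ₁).ne'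
  rw [cot_half_sq_add_tan_half_sq hsin, tan_half_sub_cot_half, ← tan_inv_eq_cot,
    biharmonic_condition_iff htan, Ne, harmonic_condition_iff htan, hn₂]
  have hquartic :
      4 * m₁ * tan θ ^ 4 - 4 * m₁ * tan θ ^ 2 + m₁ = m₁ * (2 * tan θ ^ 2 - 1) ^ 2 := by
    ring
  rw [hquartic, mul_eq_zero, or_iff_right hm₁.ne', sq_eq_zero_iff, sub_eq_zero]
  constructor
  · constructor <;> intro h <;> linarith
  · intro h hharm
    have : 4 * m₁ * tan θ ^ 2 = 2 * m₁ := by linear_combination 2 * m₁ * h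
    linarith
end

section
/- Let m₁, m₂, n₂ be positive real numbers with (m₂ − n₂)² ≥ 4n₂m₁, and let θ ∈ (0, π/2). Then the equation 2m₁ + 4m₂ + 4n₂ = m₁·((cot(θ/2))² + (tan(θ/2))²) + 4m₂·(cot θ)² + 4n₂·(tan θ)² holds if and only if (tan θ)² = (m₂ + n₂ + √((m₂ − n₂)² − 4n₂m₁))/(2n₂) or (tan θ)² = (m₂ + n₂ − √((m₂ − n₂)² − 4n₂m₁))/(2n₂). -/
/-!
The half-angle identity `cot² (θ/2) + tan² (θ/2) = 4 cot² θ + 2` together with `cot θ = 1 / tan θ`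
turns the equation into the quadratic `n₂ u² - (m₂ + n₂) u + (m₁ + m₂) = 0` in `u = tan² θ`,
whose discriminant is `(m₂ - n₂)² - 4 n₂ m₁`.
-/

open Real

theorem Real.cot_half_sq_add_tan_half_sq_s12 {x : ℝ} (hx : sin x ≠ 0) :
    cot (x / 2) ^ 2 + tan (x / 2) ^ 2 = 4 * cot x ^ 2 + 2 := by
  have hsin : sin x = 2 * sin (x / 2) * cos (x / 2) := by rw [← sin_two_mul]; ring_nf
  have hcos : cos x = cos (x / 2) ^ 2 - sin (x / 2) ^ 2 := by rw [← cos_two_mul']; ring_nf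
  have hs : sin (x / 2) ≠ 0 := fun h0 => hx (by rw [hsin, h0]; ring)
  have hc : cos (x / 2) ≠ 0 := fun h0 => hx (by rw [hsin, h0]; ring)
  rw [cot_eq_cos_div_sin, cot_eq_cos_div_sin, tan_eq_sin_div_cos, hsin, hcos]
  field_simp
  ring

theorem eq_iff_quadratic_eq_zero {m₁ m₂ n₂ u : ℝ} (hu : u ≠ 0) :
    2 * m₁ + 4 * m₂ + 4 * n₂ = m₁ * (4 * u⁻¹ + 2) + 4 * m₂ * u⁻¹ + 4 * n₂ * u ↔
      n₂ * (u * u) + -(m₂ + n₂) * u + (m₁ + m₂) = 0 := by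
  have hdiff : 2 * m₁ + 4 * m₂ + 4 * n₂ - (m₁ * (4 * u⁻¹ + 2) + 4 * m₂ * u⁻¹ + 4 * n₂ * u) =
      -(4 * u⁻¹) * (n₂ * (u * u) + -(m₂ + n₂) * u + (m₁ + m₂)) := by
    field_simp
    ring
  rw [← sub_eq_zero, hdiff, mul_eq_zero, neg_eq_zero, mul_eq_zero]
  simp [hu]

theorem stmt_12_general (m₁ m₂ n₂ θ : ℝ) (hn₂ : 0 < n₂)
    (h : (m₂ - n₂) ^ 2 ≥ 4 * n₂ * m₁)
    (hθ : θ ∈ Set.Ioo 0 (π / 2)) :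
    2 * m₁ + 4 * m₂ + 4 * n₂ =
        m₁ * ((Real.cot (θ / 2)) ^ 2 + (Real.tan (θ / 2)) ^ 2) +
          4 * m₂ * (Real.cot θ) ^ 2 + 4 * n₂ * (Real.tan θ) ^ 2 ↔
      (Real.tan θ) ^ 2 =
          (m₂ + n₂ + Real.sqrt ((m₂ - n₂) ^ 2 - 4 * n₂ * m₁)) / (2 * n₂) ∨
        (Real.tan θ) ^ 2 =
          (m₂ + n₂ - Real.sqrt ((m₂ - n₂) ^ 2 - 4 * n₂ * m₁)) / (2 * n₂) := by
  obtain ⟨hθ₀, hθ₁⟩ := hθ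
  have hsin : sin θ ≠ 0 := (sin_pos_of_pos_of_lt_pi hθ₀ (by linarith [pi_pos])).ne'
  have htan : tan θ ^ 2 ≠ 0 := (pow_pos (tan_pos_of_pos_of_lt_pi_div_two hθ₀ hθ₁) 2).ne'
  have hdiscrim : discrim n₂ (-(m₂ + n₂)) (m₁ + m₂) =
      √((m₂ - n₂) ^ 2 - 4 * n₂ * m₁) * √((m₂ - n₂) ^ 2 - 4 * n₂ * m₁) := by
    rw [mul_self_sqrt (by linarith), discrim]
    ring
  rw [cot_half_sq_add_tan_half_sq_s12 hsin, ← tan_inv_eq_cot, inv_pow, eq_iff_quadratic_eq_zero htan,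
    quadratic_eq_zero_iff hn₂.ne' hdiscrim, neg_neg]

theorem stmt_12 (m₁ m₂ n₂ θ : ℝ) (hm₁ : 0 < m₁) (hm₂ : 0 < m₂) (hn₂ : 0 < n₂)
    (h : (m₂ - n₂) ^ 2 ≥ 4 * n₂ * m₁)
    (hθ : θ ∈ Set.Ioo 0 (π / 2)) :
    2 * m₁ + 4 * m₂ + 4 * n₂ =
        m₁ * ((Real.cot (θ / 2)) ^ 2 + (Real.tan (θ / 2)) ^ 2) +
          4 * m₂ * (Real.cot θ) ^ 2 + 4 * n₂ * (Real.tan θ) ^ 2 ↔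
      (Real.tan θ) ^ 2 =
          (m₂ + n₂ + Real.sqrt ((m₂ - n₂) ^ 2 - 4 * n₂ * m₁)) / (2 * n₂) ∨
        (Real.tan θ) ^ 2 =
          (m₂ + n₂ - Real.sqrt ((m₂ - n₂) ^ 2 - 4 * n₂ * m₁)) / (2 * n₂) :=
  stmt_12_general m₁ m₂ n₂ θ hn₂ h hθ
end
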